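/- arXiv:2605.02887 — 4 statements merged into one kernel-verified Lean document; each statement's English description precedes it below -/
import Mathlib

section
/- Let σ₁, σ₂ be simplices in a finite simplicial complex X of dimensions d₁ and d₂ respectively, intersecting in a common face of dimension d₃ (d₃ = -1 if disjoint), and let f : X → ℝⁿ be a general position map. If d₁ + d₂ - d₃ < n, then f restricted to σ₁ ∪ σ₂ is injective. -/
/-!
The vertex set `σ₁ ∪ σ₂` has `d₁ + d₂ - d₃ + 1 ≤ n` elements, so its image under `f` is affinely
independent and some affine map `h : ℝⁿ → ℝᵐ` sends each `f v` back to `v`. On each `σᵢ` the map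
`f` is affine, so `h ∘ f` is affine there and fixes the vertices of `σᵢ`, hence is the identity on
their convex hull. Thus `h` is a left inverse of `f` on `conv σ₁ ∪ conv σ₂`.
-/

open Geometry Set

def InGeneralPosition (n : ℕ) (S : Set (Fin n → ℝ)) : Prop :=
  ∀ t : Finset (Fin n → ℝ), ↑t ⊆ S → t.card ≤ n + 1 →
    AffineIndependent ℝ ((↑) : t → (Fin n → ℝ))

def IsGeneralPositionMap {m n : ℕ} (X : SimplicialComplex ℝ (Fin m → ℝ))
    (f : (Fin m → ℝ) → (Fin n → ℝ)) : Prop :=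
  (∀ σ ∈ X.faces, ∃ g : (Fin m → ℝ) →ᵃ[ℝ] (Fin n → ℝ),
      ∀ x ∈ convexHull ℝ (σ : Set (Fin m → ℝ)), f x = g x) ∧
  Set.InjOn f X.vertices ∧
  InGeneralPosition n (f '' X.vertices)

theorem LinearIndependent.exists_linearMap_comp_eq {K V W ι : Type*} [DivisionRing K]
    [AddCommGroup V] [Module K V] [AddCommGroup W] [Module K W] {v : ι → V}
    (hv : LinearIndependent K v) (w : ι → W) : ∃ φ : V →ₗ[K] W, φ ∘ v = w := by
  obtain ⟨ψ, hψ⟩ := (Finsupp.linearCombination K v).exists_leftInverse_of_injective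
    (LinearMap.ker_eq_bot.2 hv)
  refine ⟨Finsupp.linearCombination K w ∘ₗ ψ, funext fun i => ?_⟩
  have hψi : ψ (v i) = Finsupp.single i 1 := by
    simpa using LinearMap.congr_fun hψ (Finsupp.single i 1)
  simp [hψi]

theorem AffineIndependent.exists_affineMap_comp_eq {k V P V₂ P₂ ι : Type*} [DivisionRing k]
    [AddCommGroup V] [Module k V] [AddTorsor V P] [AddCommGroup V₂] [Module k V₂]
    [AddTorsor V₂ P₂] [Nonempty P₂] {p : ι → P} (hp : AffineIndependent k p) (q : ι → P₂) :
    ∃ g : P →ᵃ[k] P₂, g ∘ p = q := by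
  rcases isEmpty_or_nonempty ι with _ | ⟨⟨i₀⟩⟩
  · exact ⟨AffineMap.const k P (Classical.arbitrary P₂), funext isEmptyElim⟩
  have hlin := (affineIndependent_iff_linearIndependent_vsub k p i₀).1 hp
  obtain ⟨φ, hφ⟩ := hlin.exists_linearMap_comp_eq fun i => q i -ᵥ q i₀
  refine ⟨AffineMap.mk' (fun x => φ (x -ᵥ p i₀) +ᵥ q i₀) φ (p i₀) fun x => by simp,
    funext fun i => ?_⟩
  by_cases hi : i = i₀
  · subst hi; simp
  · have hφi : φ (p i -ᵥ p i₀) = q i -ᵥ q i₀ := congr_fun hφ ⟨i, hi⟩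
    simp [hφi]

theorem InGeneralPosition.affineIndependent {n : ℕ} {S : Set (Fin n → ℝ)}
    (hS : InGeneralPosition n S) {ι : Type*} [Fintype ι] {p : ι → Fin n → ℝ}
    (hp : Function.Injective p) (hpS : range p ⊆ S) (hcard : Fintype.card ι ≤ n + 1) :
    AffineIndependent ℝ p := by
  classical
  have hind := hS (Finset.univ.image p) (by simpa using hpS)
    ((Finset.card_image_le).trans hcard)
  exact hind.comp_embedding ⟨fun i => ⟨p i, by simp⟩, fun i j h => hp (congrArg Subtype.val h)⟩

theorem leftInvOn_convexHull_of_eqOn_affineMap {𝕜 E F : Type*} [Field 𝕜] [LinearOrder 𝕜]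
    [IsStrictOrderedRing 𝕜] [AddCommGroup E] [Module 𝕜 E] [AddCommGroup F] [Module 𝕜 F]
    {s : Set E} {f : E → F} {g : E →ᵃ[𝕜] F} {h : F →ᵃ[𝕜] E}
    (hfg : EqOn f g (convexHull 𝕜 s)) (hs : LeftInvOn h f s) :
    LeftInvOn h f (convexHull 𝕜 s) := by
  have hid : EqOn (h.comp g) (AffineMap.id 𝕜 E) (affineSpan 𝕜 s) :=
    AffineMap.eqOn_affineSpan fun x hx => by
      simpa [← hfg (subset_convexHull 𝕜 s hx)] using hs hx
  intro x hx
  rw [hfg hx]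
  exact hid (convexHull_subset_affineSpan s hx)

theorem generalPositionMap_injOn_union_general {m n : ℕ}
    (X : SimplicialComplex ℝ (Fin m → ℝ))
    (f : (Fin m → ℝ) → (Fin n → ℝ)) (hf : IsGeneralPositionMap X f)
    (σ₁ σ₂ : Finset (Fin m → ℝ)) (h₁ : σ₁ ∈ X.faces) (h₂ : σ₂ ∈ X.faces)
    (hd : ((σ₁.card : ℤ) - 1) + ((σ₂.card : ℤ) - 1) - (((σ₁ ∩ σ₂).card : ℤ) - 1) < n) :
    Set.InjOn f (convexHull ℝ (σ₁ : Set (Fin m → ℝ)) ∪ convexHull ℝ (σ₂ : Set (Fin m → ℝ))) := by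
  classical
  obtain ⟨haff, hinj, hgp⟩ := hf
  set u := σ₁ ∪ σ₂ with hu_def
  have hu : (u : Set (Fin m → ℝ)) ⊆ X.vertices := by
    rw [X.vertices_eq, Finset.coe_union]
    exact union_subset (subset_biUnion_of_mem h₁) (subset_biUnion_of_mem h₂)
  have hcard : Fintype.card u ≤ n + 1 := by
    have := Finset.card_union_add_card_inter σ₁ σ₂
    rw [Fintype.card_coe, hu_def]
    omega
  have hind : AffineIndependent ℝ fun v : u => f v :=
    hgp.affineIndependent (fun v w hvw => Subtype.ext (hinj (hu v.2) (hu w.2) hvw))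
      (by rintro _ ⟨v, rfl⟩; exact mem_image_of_mem f (hu v.2)) hcard
  obtain ⟨h, hh⟩ := hind.exists_affineMap_comp_eq fun v => (v : Fin m → ℝ)
  have hleft : LeftInvOn h f u := fun v hv => congr_fun hh ⟨v, hv⟩
  have hsimplex : ∀ σ ∈ X.faces, σ ⊆ u → LeftInvOn h f (convexHull ℝ σ) := by
    intro σ hσ hσu
    obtain ⟨g, hg⟩ := haff σ hσ
    exact leftInvOn_convexHull_of_eqOn_affineMap hg (hleft.mono hσu)
  refine LeftInvOn.injOn (f₁' := h) ?_
  rintro x (hx | hx)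
  exacts [hsimplex σ₁ h₁ Finset.subset_union_left hx,
    hsimplex σ₂ h₂ Finset.subset_union_right hx]

/-- if two simplices of dimensions `d₁, d₂` meet in a common face of
dimension `d₃` and `d₁ + d₂ - d₃ < n`, then a general position map is injective on
their union. Here `dᵢ = σᵢ.card - 1`, computed in `ℤ` (`d₃ = -1` when disjoint). -/
theorem generalPositionMap_injOn_union {m n : ℕ}
    (X : SimplicialComplex ℝ (Fin m → ℝ)) (hX : X.faces.Finite)
    (f : (Fin m → ℝ) → (Fin n → ℝ)) (hf : IsGeneralPositionMap X f)
    (σ₁ σ₂ : Finset (Fin m → ℝ)) (h₁ : σ₁ ∈ X.faces) (h₂ : σ₂ ∈ X.faces)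
    (hface : (σ₁ ∩ σ₂).Nonempty → σ₁ ∩ σ₂ ∈ X.faces)
    (hd : ((σ₁.card : ℤ) - 1) + ((σ₂.card : ℤ) - 1) - (((σ₁ ∩ σ₂).card : ℤ) - 1) < n) :
    Set.InjOn f (convexHull ℝ (σ₁ : Set (Fin m → ℝ)) ∪ convexHull ℝ (σ₂ : Set (Fin m → ℝ))) :=
  generalPositionMap_injOn_union_general X f hf σ₁ σ₂ h₁ h₂ hd
end

section
/- Let σ ⊆ ℝᵏ be a k-simplex, let p be a point in the interior of σ, and let τ be a convex subset of ∂σ with dim(span τ) ≤ k − 2 and p ∉ span(τ). Then the set of points v in the interior of σ for which p lies in the cone Cone_v(τ) = {tv + (1−t)x : x ∈ τ, t ∈ [0,1]} is contained in an affine subspace of ℝᵏ of dimension at most k − 1. -/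
/-!
A point `p = t v + (1 - t) x` of the cone with `x ∈ τ` and `p ∉ τ` has `t ≠ 0`, so the cone point
`v = x + t⁻¹ (p - x)` lies on the line through `x` and `p`, hence in `span (τ ∪ {p})`. Adding one
point raises the dimension of an affine span by at most one, so this span has dimension at most
`k - 1`.
-/

open Set

/-- The cone over `τ` with cone point `v`: the union of segments from `v` to points of `τ`. -/
def coneOver {k : ℕ} (v : Fin k → ℝ) (τ : Set (Fin k → ℝ)) : Set (Fin k → ℝ) :=
  {y | ∃ x ∈ τ, ∃ t ∈ Set.Icc (0 : ℝ) 1, y = t • v + (1 - t) • x}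

theorem mem_affineSpan_insert_of_mem_coneOver {k : ℕ} {v p : Fin k → ℝ} {τ : Set (Fin k → ℝ)}
    (hpτ : p ∉ τ) (hp : p ∈ coneOver v τ) : v ∈ affineSpan ℝ (insert p τ) := by
  obtain ⟨x, hx, t, -, rfl⟩ := hp
  set p := t • v + (1 - t) • x
  have ht : t ≠ 0 := by
    rintro rfl
    exact hpτ (by simpa [p] using hx)
  have hv : AffineMap.lineMap x p t⁻¹ = v := by
    rw [AffineMap.lineMap_apply_module']
    match_scalars
    · simp [ht]
    · field_simp
      ring
  have hline : line[ℝ, x, p] ≤ affineSpan ℝ (insert p τ) :=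
    affineSpan_mono ℝ (insert_subset_iff.2 ⟨mem_insert_of_mem _ hx, by simp⟩)
  exact hv ▸ hline (AffineMap.lineMap_mem_affineSpan_pair _ _ _)

theorem cone_point_condition_codim_one_general {k : ℕ}
    (σ : Set (Fin k → ℝ))
    (p : Fin k → ℝ)
    (τ : Set (Fin k → ℝ))
    (hτdim : (Module.finrank ℝ (affineSpan ℝ τ).direction : ℤ) ≤ (k : ℤ) - 2)
    (hpτ : p ∉ affineSpan ℝ τ) :
    ∃ A : AffineSubspace ℝ (Fin k → ℝ),
      (Module.finrank ℝ A.direction : ℤ) ≤ (k : ℤ) - 1 ∧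
      {v ∈ interior σ | p ∈ coneOver v τ} ⊆ (A : Set (Fin k → ℝ)) := by
  refine ⟨affineSpan ℝ (insert p τ), ?_, fun v hv => ?_⟩
  · have hinsert := finrank_vectorSpan_insert_le_set ℝ τ p
    rw [← direction_affineSpan, ← direction_affineSpan] at hinsert
    omega
  · exact mem_affineSpan_insert_of_mem_coneOver (fun h => hpτ (subset_affineSpan ℝ τ h)) hv.2

/-- for a `k`-simplex `σ ⊆ ℝᵏ`, a point `p ∈ σ°`, and a convex subset `τ`
of `∂σ` whose affine span has dimension `≤ k - 2` and does not contain `p`, the set of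
`v ∈ σ°` with `p ∈ Cone_v(τ)` lies in an affine subspace of dimension at most `k - 1`. -/
theorem cone_point_condition_codim_one {k : ℕ}
    (w : Fin (k + 1) → (Fin k → ℝ)) (hw : AffineIndependent ℝ w)
    (σ : Set (Fin k → ℝ)) (hσ : σ = convexHull ℝ (Set.range w))
    (p : Fin k → ℝ) (hp : p ∈ interior σ)
    (τ : Set (Fin k → ℝ)) (hτσ : τ ⊆ frontier σ) (hτconv : Convex ℝ τ)
    (hτdim : (Module.finrank ℝ (affineSpan ℝ τ).direction : ℤ) ≤ (k : ℤ) - 2)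
    (hpτ : p ∉ affineSpan ℝ τ) :
    ∃ A : AffineSubspace ℝ (Fin k → ℝ),
      (Module.finrank ℝ A.direction : ℤ) ≤ (k : ℤ) - 1 ∧
      {v ∈ interior σ | p ∈ coneOver v τ} ⊆ (A : Set (Fin k → ℝ)) :=
  cone_point_condition_codim_one_general σ p τ hτdim hpτ
end

section
/- Let L be a subcomplex of a simplicial complex N in ℝⁿ with a strong deformation retraction H : N × I → N onto L. Then for the cone with apex v, there exists a strong deformation retraction of Cone_v(N) onto Cone_v(L) whose restriction to N is H. -/
/-!
Choose an affine function `F` with `F v = 1` vanishing on `N`; it reads off the cone coordinate: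
`F (s • v + (1 - s) • x) = s` for `x ∈ N`, and `x` is recovered from that point when `s ≠ 1`.
The naive extension `s • v + (1 - s) • x ↦ s • v + (1 - s) • H t x` need not be continuous at
the apex, because `N` may be unbounded and `H t x` arbitrarily far from `x`. So the cone
coordinate is in addition pushed towards `1` by the fraction `σ = min 1 (s ‖H t x - x‖ / √(1 - s))`
of what remains. `σ` vanishes where `H t x = x` (so `H' 0 = id` and `Cone_v(L)` stays fixed) and on
the base `s = 0` (so `H'` restricts to `H`), while for `s ≥ 1/2` it gives
`‖H' t y - v‖ ≤ ‖y - v‖ + 2 √(1 - s)`, hence continuity at the apex.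
-/

open Geometry Set

/-- `H` is a strong deformation retraction of `A` onto `B` (within ambient space `α`). -/
def IsSDRWith {α : Type*} [TopologicalSpace α] (A B : Set α) (H : ℝ → α → α) : Prop :=
  B ⊆ A ∧
  ContinuousOn (fun p : ℝ × α => H p.1 p.2) (Set.Icc (0 : ℝ) 1 ×ˢ A) ∧
  (∀ x ∈ A, H 0 x = x) ∧
  (∀ t ∈ Set.Icc (0 : ℝ) 1, ∀ x ∈ A, H t x ∈ A) ∧
  (∀ x ∈ A, H 1 x ∈ B) ∧
  (∀ t ∈ Set.Icc (0 : ℝ) 1, ∀ x ∈ B, H t x = x)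

/-- The geometric cone with apex `v` over a set `A`: the union of segments from `v`
to points of `A`. -/
def coneSet {m : ℕ} (v : Fin m → ℝ) (A : Set (Fin m → ℝ)) : Set (Fin m → ℝ) :=
  {y | ∃ x ∈ A, ∃ t ∈ Set.Icc (0 : ℝ) 1, y = t • v + (1 - t) • x}

open Filter Topology

theorem AffineSubspace.exists_affineMap_eq_one_of_notMem {k V P : Type*} [Field k]
    [AddCommGroup V] [Module k V] [AddTorsor V P] {s : AffineSubspace k P} {v : P}
    (hv : v ∉ s) : ∃ F : P →ᵃ[k] k, F v = 1 ∧ ∀ x ∈ s, F x = 0 := by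
  rcases s.eq_bot_or_nonempty with rfl | ⟨p, hp⟩
  · exact ⟨AffineMap.const k P 1, rfl, fun x hx => absurd hx (AffineSubspace.notMem_bot k V x)⟩
  have hvp : v -ᵥ p ∉ s.direction := fun h =>
    hv (by simpa using AffineSubspace.vadd_mem_of_mem_direction h hp)
  obtain ⟨g, hg, hgs⟩ := Submodule.exists_dual_map_eq_bot_of_notMem hvp inferInstance
  refine ⟨((g (v -ᵥ p))⁻¹ • g).toAffineMap.comp (AffineEquiv.vaddConst k p).symm.toAffineMap,
    ?_, fun x hx => ?_⟩
  · simp [hg]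
  · have : g (x -ᵥ p) = 0 := by
      simpa [hgs] using Submodule.mem_map_of_mem (f := g) (AffineSubspace.vsub_mem_direction hx hp)
    simp [this]

section
variable {E : Type*} [NormedAddCommGroup E]

noncomputable def coneDamping (H : ℝ → E → E) (t s : ℝ) (x : E) : ℝ :=
  min 1 (s * ‖H t x - x‖ / √(1 - s))

variable {H : ℝ → E → E} {t : ℝ} {x : E}

theorem coneDamping_mem_Icc {s : ℝ} (hs : 0 ≤ s) (t : ℝ) (x : E) :
    coneDamping H t s x ∈ Icc 0 1 :=
  ⟨le_min zero_le_one (by positivity), min_le_left _ _⟩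

theorem one_sub_coneDamping_mul_le {s : ℝ} (hs : s ∈ Ico (1 / 2) 1) (t : ℝ) (x : E) :
    (1 - coneDamping H t s x) * ‖H t x - x‖ ≤ 2 * √(1 - s) := by
  have hσ0 := (coneDamping_mem_Icc (H := H) (by linarith [hs.1]) t x).1
  have hsqrt : 0 < √(1 - s) := Real.sqrt_pos.mpr (by linarith [hs.2])
  by_cases hbig : 1 ≤ s * ‖H t x - x‖ / √(1 - s)
  · rw [coneDamping, min_eq_left hbig]
    simp [hsqrt.le]
  · have hsmall : s * ‖H t x - x‖ < √(1 - s) := (div_lt_one hsqrt).mp (not_le.mp hbig)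
    nlinarith [hs.1, norm_nonneg (H t x - x), mul_nonneg hσ0 (norm_nonneg (H t x - x))]

theorem coneDamping_of_apply_eq_self (hx : H t x = x) (s : ℝ) : coneDamping H t s x = 0 := by
  simp [coneDamping, hx]

theorem coneDamping_zero (t : ℝ) (x : E) : coneDamping H t 0 x = 0 := by
  simp [coneDamping]

end

section
variable {E : Type*} [NormedAddCommGroup E] [NormedSpace ℝ E]

-- At the apex `F y = 1` this is the junk value `0`, but `coneExtension` gives it weight `0` there.
noncomputable def coneBase (F : E →ᴬ[ℝ] ℝ) (v y : E) : E := (1 - F y)⁻¹ • (y - F y • v)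

noncomputable def coneExtension (F : E →ᴬ[ℝ] ℝ) (v : E) (H : ℝ → E → E) (t : ℝ) (y : E) : E :=
  (F y + (1 - F y) * coneDamping H t (F y) (coneBase F v y)) • v +
    ((1 - F y) * (1 - coneDamping H t (F y) (coneBase F v y))) • H t (coneBase F v y)

variable {F : E →ᴬ[ℝ] ℝ} {v x : E} {H : ℝ → E → E} {t : ℝ}

theorem apply_combo_eq (hv : F v = 1) (hx : F x = 0) (s : ℝ) :
    F (s • v + (1 - s) • x) = s := by
  have h := Convex.combo_affine_apply (x := v) (y := x) (f := (F : E →ᵃ[ℝ] ℝ))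
    (add_sub_cancel s 1)
  simpa [hv, hx] using h

theorem coneBase_combo (hv : F v = 1) (hx : F x = 0) {s : ℝ} (hs : s ≠ 1) :
    coneBase F v (s • v + (1 - s) • x) = x := by
  rw [coneBase, apply_combo_eq hv hx, add_sub_cancel_left, smul_smul,
    inv_mul_cancel₀ (sub_ne_zero.mpr hs.symm), one_smul]

theorem coneExtension_combo (hv : F v = 1) (hx : F x = 0) {s : ℝ} (hs : s ≠ 1) (t : ℝ) :
    coneExtension F v H t (s • v + (1 - s) • x) =
      (s + (1 - s) * coneDamping H t s x) • v +
        (1 - (s + (1 - s) * coneDamping H t s x)) • H t x := by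
  rw [coneExtension, apply_combo_eq hv hx, coneBase_combo hv hx hs]
  congr 2
  ring

theorem coneExtension_apex (hv : F v = 1) (t : ℝ) : coneExtension F v H t v = v := by
  simp [coneExtension, hv]

theorem coneExtension_of_apply_eq_zero (hx : F x = 0) (t : ℝ) :
    coneExtension F v H t x = H t x := by
  have hbase : coneBase F v x = x := by simp [coneBase, hx]
  simp [coneExtension, hx, hbase, coneDamping_zero]

theorem coneExtension_combo_of_apply_eq_self (hv : F v = 1) (hx : F x = 0) (hHx : H t x = x)
    (s : ℝ) : coneExtension F v H t (s • v + (1 - s) • x) = s • v + (1 - s) • x := by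
  rcases eq_or_ne s 1 with rfl | hs
  · simpa using coneExtension_apex hv t
  · rw [coneExtension_combo hv hx hs, coneDamping_of_apply_eq_self hHx, hHx]
    simp

theorem norm_coneExtension_combo_sub_le (hv : F v = 1) (hx : F x = 0) {s : ℝ}
    (hs : s ∈ Icc (1 / 2) 1) (t : ℝ) :
    ‖coneExtension F v H t (s • v + (1 - s) • x) - v‖ ≤
      ‖s • v + (1 - s) • x - v‖ + 2 * √(1 - s) := by
  rcases eq_or_lt_of_le hs.2 with rfl | hs1
  · simp [coneExtension_apex hv]
  obtain ⟨hσ0, hσ1⟩ := coneDamping_mem_Icc (H := H) (by linarith [hs.1]) t x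
  have hdamp := one_sub_coneDamping_mul_le (H := H) ⟨hs.1, hs1⟩ t x
  set σ := coneDamping H t s x
  have hcoef : 0 ≤ (1 - s) * (1 - σ) := mul_nonneg (by linarith) (by linarith)
  have hy : s • v + (1 - s) • x - v = (1 - s) • (x - v) := by module
  have hH' : coneExtension F v H t (s • v + (1 - s) • x) - v =
      ((1 - s) * (1 - σ)) • (H t x - v) := by
    rw [coneExtension_combo hv hx hs1.ne]
    module
  have htri : ‖H t x - v‖ ≤ ‖H t x - x‖ + ‖x - v‖ := norm_sub_le_norm_sub_add_norm_sub _ _ _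
  rw [hH', hy, norm_smul, norm_smul, Real.norm_of_nonneg hcoef,
    Real.norm_of_nonneg (by linarith)]
  calc (1 - s) * (1 - σ) * ‖H t x - v‖
      ≤ (1 - s) * ((1 - σ) * ‖H t x - x‖) + (1 - s) * (1 - σ) * ‖x - v‖ := by
        nlinarith [mul_le_mul_of_nonneg_left htri hcoef]
    _ ≤ (1 - s) * (2 * √(1 - s)) + (1 - s) * ‖x - v‖ := by
        gcongr
        nlinarith
    _ ≤ (1 - s) * ‖x - v‖ + 2 * √(1 - s) := by
        nlinarith [Real.sqrt_nonneg (1 - s), hs.1]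

theorem continuousOn_coneExtension {T : Set ℝ} {A S : Set E}
    (hH : ContinuousOn (fun p : ℝ × E => H p.1 p.2) (T ×ˢ A)) (hS : ∀ y ∈ S, F y < 1)
    (hSA : MapsTo (coneBase F v) S A) :
    ContinuousOn (fun p : ℝ × E => coneExtension F v H p.1 p.2) (T ×ˢ S) := by
  have hF : ContinuousOn (fun p : ℝ × E => F p.2) (T ×ˢ S) :=
    (F.continuous.comp continuous_snd).continuousOn
  have hbase : ContinuousOn (fun p : ℝ × E => coneBase F v p.2) (T ×ˢ S) :=
    ((continuousOn_const.sub hF).inv₀ fun p hp => (sub_pos.mpr (hS _ hp.2)).ne').smul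
      (continuous_snd.continuousOn.sub (hF.smul continuousOn_const))
  have hHbase : ContinuousOn (fun p : ℝ × E => H p.1 (coneBase F v p.2)) (T ×ˢ S) :=
    hH.comp (continuous_fst.continuousOn.prodMk hbase) fun p hp => ⟨hp.1, hSA hp.2⟩
  have hdamp : ContinuousOn
      (fun p : ℝ × E => coneDamping H p.1 (F p.2) (coneBase F v p.2)) (T ×ˢ S) :=
    continuousOn_const.inf <| (hF.mul (hHbase.sub hbase).norm).div
      (continuousOn_const.sub hF).sqrt fun p hp =>
        (Real.sqrt_pos.mpr (sub_pos.mpr (hS _ hp.2))).ne'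
  exact ((hF.add ((continuousOn_const.sub hF).mul hdamp)).smul continuousOn_const).add
    (((continuousOn_const.sub hF).mul (continuousOn_const.sub hdamp)).smul hHbase)

end

section
variable {m : ℕ} {v x : Fin m → ℝ} {A B : Set (Fin m → ℝ)} {F : (Fin m → ℝ) →ᴬ[ℝ] ℝ}
  {H : ℝ → (Fin m → ℝ) → (Fin m → ℝ)} {t s : ℝ}

theorem coneSet_mono (h : A ⊆ B) : coneSet v A ⊆ coneSet v B := by
  rintro y ⟨x, hx, s, hs, rfl⟩
  exact ⟨x, h hx, s, hs, rfl⟩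

theorem coneBase_mem_of_mem_coneSet (hv : F v = 1) (hA : ∀ x ∈ A, F x = 0) {y : Fin m → ℝ}
    (hy : y ∈ coneSet v A) (hy1 : F y ≠ 1) : coneBase F v y ∈ A := by
  obtain ⟨x, hx, s, -, rfl⟩ := hy
  rw [apply_combo_eq hv (hA x hx)] at hy1
  rwa [coneBase_combo hv (hA x hx) hy1]

theorem coneExtension_combo_mem_coneSet (hv : F v = 1) (hx : F x = 0) (hs : s ∈ Icc 0 1)
    (hHx : H t x ∈ B) : coneExtension F v H t (s • v + (1 - s) • x) ∈ coneSet v B := by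
  rcases eq_or_ne s 1 with rfl | hs1
  · exact ⟨H t x, hHx, 1, ⟨zero_le_one, le_rfl⟩, by simp [coneExtension_apex hv]⟩
  obtain ⟨hσ0, hσ1⟩ := coneDamping_mem_Icc (H := H) hs.1 t x
  refine ⟨H t x, hHx, s + (1 - s) * coneDamping H t s x, ⟨?_, ?_⟩,
    coneExtension_combo hv hx hs1 t⟩ <;> nlinarith [hs.1, hs.2]

theorem tendsto_coneExtension_apex (hv : F v = 1) (hA : ∀ x ∈ A, F x = 0) (T : Set ℝ) (t : ℝ) :
    Tendsto (fun p : ℝ × (Fin m → ℝ) => coneExtension F v H p.1 p.2)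
      (𝓝[T ×ˢ coneSet v A] (t, v)) (𝓝 v) := by
  have hbound : Tendsto (fun p : ℝ × (Fin m → ℝ) => ‖p.2 - v‖ + 2 * √(1 - F p.2))
      (𝓝[T ×ˢ coneSet v A] (t, v)) (𝓝 0) := by
    have hc : Continuous fun p : ℝ × (Fin m → ℝ) => ‖p.2 - v‖ + 2 * √(1 - F p.2) := by
      fun_prop
    simpa [hv] using (hc.tendsto (t, v)).mono_left nhdsWithin_le_nhds
  have hnear : ∀ᶠ p in 𝓝[T ×ˢ coneSet v A] (t, v), p.2 ∈ coneSet v A ∧ 1 / 2 < F p.2 := by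
    refine (eventually_mem_nhdsWithin.mono fun p hp => hp.2).and (nhdsWithin_le_nhds ?_)
    exact (isOpen_lt continuous_const (F.continuous.comp continuous_snd)).mem_nhds
      (by simp [hv]; norm_num)
  rw [tendsto_iff_norm_sub_tendsto_zero]
  refine squeeze_zero' (Eventually.of_forall fun _ => norm_nonneg _) ?_ hbound
  refine hnear.mono fun p ⟨⟨x, hx, s, hs, hp⟩, hhalf⟩ => ?_
  rw [hp, apply_combo_eq hv (hA x hx)] at hhalf ⊢
  exact norm_coneExtension_combo_sub_le hv (hA x hx) ⟨hhalf.le, hs.2⟩ p.1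

theorem continuousOn_coneExtension_coneSet (hv : F v = 1) (hA : ∀ x ∈ A, F x = 0) {T : Set ℝ}
    (hH : ContinuousOn (fun p : ℝ × (Fin m → ℝ) => H p.1 p.2) (T ×ˢ A)) :
    ContinuousOn (fun p : ℝ × (Fin m → ℝ) => coneExtension F v H p.1 p.2)
      (T ×ˢ coneSet v A) := by
  rintro ⟨t, y⟩ ⟨ht, hy⟩
  obtain ⟨x, hx, s, hs, rfl⟩ := id hy
  rcases hs.2.lt_or_eq with hs1 | rfl
  · have hoff : ContinuousOn (fun p : ℝ × (Fin m → ℝ) => coneExtension F v H p.1 p.2)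
        (T ×ˢ (coneSet v A ∩ {y | F y < 1})) :=
      continuousOn_coneExtension hH (fun y hy => hy.2)
        fun y hy => coneBase_mem_of_mem_coneSet hv hA hy.1 hy.2.ne
    have hFy : F (s • v + (1 - s) • x) < 1 := by rwa [apply_combo_eq hv (hA x hx)]
    refine (hoff _ ⟨ht, hy, hFy⟩).mono_of_mem_nhdsWithin (mem_nhdsWithin.mpr ?_)
    exact ⟨{p | F p.2 < 1}, isOpen_lt (F.continuous.comp continuous_snd) continuous_const,
      hFy, fun p hp => ⟨hp.2.1, hp.2.2, hp.1⟩⟩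
  · simp only [one_smul, sub_self, zero_smul, add_zero]
    rw [ContinuousWithinAt, coneExtension_apex hv]
    exact tendsto_coneExtension_apex hv hA T t

theorem IsSDRWith.coneSet_coneExtension (hv : F v = 1) (hA : ∀ x ∈ A, F x = 0)
    (hH : IsSDRWith A B H) : IsSDRWith (coneSet v A) (coneSet v B) (coneExtension F v H) := by
  obtain ⟨hBA, hcont, h0, hmaps, h1, hfix⟩ := hH
  refine ⟨coneSet_mono hBA, continuousOn_coneExtension_coneSet hv hA hcont, ?_, ?_, ?_, ?_⟩
  · rintro _ ⟨x, hx, s, -, rfl⟩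
    exact coneExtension_combo_of_apply_eq_self hv (hA x hx) (h0 x hx) s
  · rintro t ht _ ⟨x, hx, s, hs, rfl⟩
    exact coneExtension_combo_mem_coneSet hv (hA x hx) hs (hmaps t ht x hx)
  · rintro _ ⟨x, hx, s, hs, rfl⟩
    exact coneExtension_combo_mem_coneSet hv (hA x hx) hs (h1 x hx)
  · rintro t ht _ ⟨x, hx, s, -, rfl⟩
    exact coneExtension_combo_of_apply_eq_self hv (hA x (hBA hx)) (hfix t ht x hx) s

end

theorem cone_strong_deformation_retract_general {m : ℕ}
    (N L : SimplicialComplex ℝ (Fin m → ℝ))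
    (v : Fin m → ℝ) (hv : v ∉ affineSpan ℝ N.space)
    (H : ℝ → (Fin m → ℝ) → (Fin m → ℝ)) (hH : IsSDRWith N.space L.space H) :
    ∃ H' : ℝ → (Fin m → ℝ) → (Fin m → ℝ),
      IsSDRWith (coneSet v N.space) (coneSet v L.space) H' ∧
      ∀ t ∈ Set.Icc (0 : ℝ) 1, ∀ x ∈ N.space, H' t x = H t x := by
  obtain ⟨F, hFv, hFN⟩ := AffineSubspace.exists_affineMap_eq_one_of_notMem hv
  let F' : (Fin m → ℝ) →ᴬ[ℝ] ℝ := ⟨F, F.continuous_of_finiteDimensional⟩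
  have hF'N : ∀ x ∈ N.space, F' x = 0 := fun x hx => hFN x (subset_affineSpan ℝ _ hx)
  exact ⟨coneExtension F' v H, hH.coneSet_coneExtension hFv hF'N,
    fun t _ x hx => coneExtension_of_apply_eq_zero (hF'N x hx) t⟩

/-- a strong deformation retraction `H` of (the underlying space of) a
simplicial complex `N` onto a subcomplex `L` extends to a strong deformation retraction of
`Cone_v(N)` onto `Cone_v(L)` restricting to `H` on `N`.  (The apex `v` lies outside the
affine span of `N`, as when the cone is realized in one higher dimension.) -/
theorem cone_strong_deformation_retract {m : ℕ}
    (N L : SimplicialComplex ℝ (Fin m → ℝ)) (hL : L.faces ⊆ N.faces)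
    (v : Fin m → ℝ) (hv : v ∉ affineSpan ℝ N.space)
    (H : ℝ → (Fin m → ℝ) → (Fin m → ℝ)) (hH : IsSDRWith N.space L.space H) :
    ∃ H' : ℝ → (Fin m → ℝ) → (Fin m → ℝ),
      IsSDRWith (coneSet v N.space) (coneSet v L.space) H' ∧
      ∀ t ∈ Set.Icc (0 : ℝ) 1, ∀ x ∈ N.space, H' t x = H t x :=
  cone_strong_deformation_retract_general N L v hv H hH
end

section
/- Let X be the spine K of a finite simplicial complex L realized in its barycentric subdivision L', and let N = N(K, L'') be a regular neighborhood of K (the simplicial neighborhood in a barycentric subdivision of L' relative to K). Then the boundary Ṅ of the regular neighborhood, i.e., the subcomplex of simplices of N disjoint from K, equals the disjoint union of the links Lk_{L''}(v) over the original vertices v ∈ L⁽⁰⁾. -/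
/-!
A vertex of `L''` is a chain `d` of faces of `L`; it lies off the spine exactly when it contains
a vertex `{v}` of `L`, and then `v` lies in every member of `d`. If a face `τ` of `L''` misses the
spine, some `{v}` lies in its least member and hence in all its members, so `τ` joins `{{v}}`:
it lies in the link of `{{v}}`, and `{{v}} ∉ τ` because `τ` also joins a spine vertex.
Conversely, the least member of a face of that link contains a face `s ⊋ {v}`, and `{s}` is a
spine vertex joining `τ`. Two distinct vertices never lie in a common chain of faces, so the
links are disjoint.
-/

open Finset Set

/-- An abstract simplicial complex on vertex type `V`: a downward-closed collection of
nonempty finite subsets of `V`. -/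
structure AbsSC (V : Type*) where
  faces : Set (Finset V)
  nonempty_of_mem : ∀ s ∈ faces, s.Nonempty
  down_closed : ∀ s ∈ faces, ∀ t ⊆ s, t.Nonempty → t ∈ faces

namespace AbsSC

variable {V : Type*}

/-- The barycentric subdivision: faces are nonempty chains of faces. -/
def sd (X : AbsSC V) : AbsSC (Finset V) where
  faces := {c | c.Nonempty ∧ ↑c ⊆ X.faces ∧ IsChain (· ⊆ ·) (c : Set (Finset V))}
  nonempty_of_mem := fun _ hs => hs.1
  down_closed := fun _ hs _ hts htne =>
    ⟨htne, fun _ hx => hs.2.1 (hts hx), by exact hs.2.2.mono (Finset.coe_subset.mpr hts)⟩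

/-- The link of a face `σ`: faces disjoint from `σ` whose union with `σ` is a face. -/
def link [DecidableEq V] (X : AbsSC V) (σ : Finset V) : AbsSC V where
  faces := {τ | τ.Nonempty ∧ τ ∩ σ = ∅ ∧ τ ∪ σ ∈ X.faces}
  nonempty_of_mem := fun _ hs => hs.1
  down_closed := fun s hs t hts htne => by
    refine ⟨htne, ?_, ?_⟩
    · rw [← Finset.subset_empty, ← hs.2.1]
      exact Finset.inter_subset_inter hts (le_refl σ)
    · exact X.down_closed _ hs.2.2 _ (Finset.union_subset_union hts (le_refl σ))
        (htne.mono Finset.subset_union_left)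

end AbsSC

variable {V : Type*} [DecidableEq V]

/-- The vertices of the subdivided spine `K ⊆ L''`: chains all of whose members have at
least two vertices (barycenters of simplices of positive dimension, and chains thereof). -/
def IsSpineVertex (c : Finset (Finset V)) : Prop := ∀ s ∈ c, 2 ≤ s.card

/-- The simplicial neighborhood `N(K, L'')`: the union of the stars in `L''` of the
vertices of the (subdivided) spine `K`. -/
def regNbhdFaces (L : AbsSC V) : Set (Finset (Finset (Finset V))) :=
  {τ | τ ∈ L.sd.sd.faces ∧ ∃ c : Finset (Finset V),
      c ∈ L.sd.faces ∧ IsSpineVertex c ∧ insert c τ ∈ L.sd.sd.faces}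

/-- The boundary `Ṅ` of the regular neighborhood: faces of `N(K, L'')` disjoint from `K`. -/
def regNbhdBoundary (L : AbsSC V) : Set (Finset (Finset (Finset V))) :=
  {τ | τ ∈ regNbhdFaces L ∧ ∀ c ∈ τ, ¬ IsSpineVertex c}

theorem Finset.exists_subset_forall_of_isChain {α : Type*} {c : Finset (Finset α)}
    (hne : c.Nonempty) (hc : IsChain (· ⊆ ·) (c : Set (Finset α))) :
    ∃ m ∈ c, ∀ t ∈ c, m ⊆ t := by
  obtain ⟨m, hm, hmin⟩ := c.exists_min_image Finset.card hne
  refine ⟨m, hm, fun t ht => (hc.total hm ht).elim id fun htm => ?_⟩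
  exact (Finset.eq_of_subset_of_card_le htm (hmin t ht)).ge

namespace AbsSC

variable {α : Type*} {X : AbsSC α}

theorem exists_subset_forall_of_mem_sd_faces {c : Finset (Finset α)} (hc : c ∈ X.sd.faces) :
    ∃ m ∈ c, ∀ t ∈ c, m ⊆ t :=
  Finset.exists_subset_forall_of_isChain hc.1 hc.2.2

theorem nonempty_of_mem_sd_faces {c : Finset (Finset α)} (hc : c ∈ X.sd.faces)
    {s : Finset α} (hs : s ∈ c) : s.Nonempty :=
  X.nonempty_of_mem s (hc.2.1 hs)

theorem mem_of_singleton_mem_sd_faces {c : Finset (Finset α)} (hc : c ∈ X.sd.faces) {a : α}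
    (ha : {a} ∈ c) {s : Finset α} (hs : s ∈ c) : a ∈ s := by
  rcases eq_or_ne s {a} with rfl | hsa
  · exact Finset.mem_singleton_self a
  rcases hc.2.2 hs ha hsa with h | h
  · exact absurd ((X.nonempty_of_mem_sd_faces hc hs).subset_singleton_iff.1 h) hsa
  · exact Finset.singleton_subset_iff.1 h

theorem singleton_mem_sd_faces {s : Finset α} (hs : s ∈ X.faces) : {s} ∈ X.sd.faces :=
  ⟨Finset.singleton_nonempty s, by simpa using hs, by simp [IsChain]⟩

theorem insert_mem_sd_faces [DecidableEq α] {c : Finset (Finset α)} (hc : c ∈ X.sd.faces)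
    {s : Finset α} (hs : s ∈ X.faces) (hcomp : ∀ t ∈ c, s ⊆ t ∨ t ⊆ s) :
    insert s c ∈ X.sd.faces := by
  refine ⟨Finset.insert_nonempty s c, ?_, ?_⟩
  · rw [Finset.coe_insert]
    exact Set.insert_subset hs hc.2.1
  · rw [Finset.coe_insert]
    exact hc.2.2.insert fun t ht _ => hcomp t ht

theorem mem_link_sd_faces_iff [DecidableEq α] {s : Finset α} {τ : Finset (Finset α)} :
    τ ∈ (X.sd.link {s}).faces ↔
      τ ∈ X.sd.faces ∧ s ∈ X.faces ∧ ∀ t ∈ τ, s ⊂ t ∨ t ⊂ s := by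
  rw [link, Set.mem_ofPred_eq, ← Finset.disjoint_iff_inter_eq_empty,
    Finset.disjoint_singleton_right, Finset.union_singleton]
  constructor
  · rintro ⟨hτ, hsτ, hsτX⟩
    refine ⟨X.sd.down_closed _ hsτX τ (Finset.subset_insert s τ) hτ,
      hsτX.2.1 (Finset.mem_insert_self s τ), fun t ht => ?_⟩
    have hts : t ≠ s := fun h => hsτ (h ▸ ht)
    exact (hsτX.2.2 (Finset.mem_insert_self s τ) (Finset.mem_insert_of_mem ht) hts.symm).imp
      (·.ssubset_of_ne hts.symm) (·.ssubset_of_ne hts)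
  · rintro ⟨hτ, hs, hcomp⟩
    refine ⟨hτ.1, fun hsτ => ?_, X.insert_mem_sd_faces hτ hs fun t ht => (hcomp t ht).imp
      (·.subset) (·.subset)⟩
    exact (hcomp s hsτ).elim (lt_irrefl s) (lt_irrefl s)

theorem mem_link_sd_faces_singleton_iff [DecidableEq α] {a : α} {τ : Finset (Finset α)} :
    τ ∈ (X.sd.link {{a}}).faces ↔ τ ∈ X.sd.faces ∧ {a} ∈ X.faces ∧ ∀ t ∈ τ, {a} ⊂ t := by
  rw [mem_link_sd_faces_iff]
  refine and_congr_right fun hτ => and_congr_right fun _ => forall₂_congr fun t ht => ?_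
  rw [Finset.ssubset_singleton_iff, or_iff_left (X.nonempty_of_mem_sd_faces hτ ht).ne_empty]

end AbsSC

theorem not_isSpineVertex_of_singleton_mem {β : Type*} {c : Finset (Finset β)} {v : β}
    (hv : {v} ∈ c) : ¬ IsSpineVertex c := fun hc => by simpa using hc {v} hv

theorem exists_singleton_mem_of_not_isSpineVertex {β : Type*} {c : Finset (Finset β)}
    (hne : ∀ s ∈ c, s.Nonempty) (hc : ¬ IsSpineVertex c) : ∃ v : β, {v} ∈ c := by
  obtain ⟨s, hs, hcard⟩ := not_forall₂.1 hc
  have hs1 : s.card = 1 := by have := (hne s hs).card_pos; omega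
  obtain ⟨v, rfl⟩ := Finset.card_eq_one.1 hs1
  exact ⟨v, hs⟩

theorem exists_mem_link_of_mem_regNbhdBoundary {L : AbsSC V} {τ : Finset (Finset (Finset V))}
    (hτ : τ ∈ regNbhdBoundary L) :
    ∃ v : V, ({v} : Finset V) ∈ L.faces ∧
      τ ∈ (L.sd.sd.link {{{v}}}).faces := by
  obtain ⟨⟨hτL, c, -, hc, hcτ⟩, hτK⟩ := hτ
  obtain ⟨d₀, hd₀, hd₀min⟩ := L.sd.exists_subset_forall_of_mem_sd_faces hτL
  have hd₀L : d₀ ∈ L.sd.faces := hτL.2.1 hd₀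
  obtain ⟨v, hv⟩ := exists_singleton_mem_of_not_isSpineVertex
    (fun _ => L.nonempty_of_mem_sd_faces hd₀L) (hτK d₀ hd₀)
  have hvL : {v} ∈ L.faces := hd₀L.2.1 hv
  refine ⟨v, hvL, L.sd.mem_link_sd_faces_singleton_iff.2
    ⟨hτL, L.singleton_mem_sd_faces hvL, fun d hd => ?_⟩⟩
  refine (Finset.singleton_subset_iff.2 (hd₀min d hd hv)).ssubset_of_ne ?_
  rintro rfl
  exact not_isSpineVertex_of_singleton_mem (L.sd.mem_of_singleton_mem_sd_faces hcτ
    (Finset.mem_insert_of_mem hd) (Finset.mem_insert_self c τ)) hc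

theorem mem_regNbhdBoundary_of_mem_link {L : AbsSC V} {v : V} {τ : Finset (Finset (Finset V))}
    (hτ : τ ∈ (L.sd.sd.link {{{v}}}).faces) :
    τ ∈ regNbhdBoundary L := by
  obtain ⟨hτL, -, hvτ⟩ := L.sd.mem_link_sd_faces_singleton_iff.1 hτ
  obtain ⟨d₀, hd₀, hd₀min⟩ := L.sd.exists_subset_forall_of_mem_sd_faces hτL
  have hd₀L : d₀ ∈ L.sd.faces := hτL.2.1 hd₀
  have hvd₀ : {v} ∈ d₀ := (hvτ d₀ hd₀).subset (Finset.mem_singleton_self _)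
  obtain ⟨s, hs, hsv⟩ := Finset.exists_of_ssubset (hvτ d₀ hd₀)
  have hvs : {v} ⊂ s := (Finset.singleton_subset_iff.2
    (L.mem_of_singleton_mem_sd_faces hd₀L hvd₀ hs)).ssubset_of_ne (Ne.symm (by simpa using hsv))
  have hsK : IsSpineVertex {s} := by
    intro t ht
    rw [Finset.mem_singleton.1 ht]
    exact (Finset.card_singleton v).symm.trans_lt (Finset.card_lt_card hvs)
  refine ⟨⟨hτL, {s}, L.singleton_mem_sd_faces (hd₀L.2.1 hs), hsK,
    L.sd.insert_mem_sd_faces hτL (L.singleton_mem_sd_faces (hd₀L.2.1 hs)) fun d hd =>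
      Or.inl (Finset.singleton_subset_iff.2 (hd₀min d hd hs))⟩, fun d hd => ?_⟩
  exact not_isSpineVertex_of_singleton_mem ((hvτ d hd).subset (Finset.mem_singleton_self _))

theorem disjoint_link_sd_sd_singleton {L : AbsSC V} {v w : V} (hvw : v ≠ w) :
    Disjoint (L.sd.sd.link {{{v}}}).faces
      (L.sd.sd.link {{{w}}}).faces := by
  refine Set.disjoint_left.2 fun τ hτv hτw => ?_
  obtain ⟨hτL, -, hvτ⟩ := L.sd.mem_link_sd_faces_singleton_iff.1 hτv
  obtain ⟨-, -, hwτ⟩ := L.sd.mem_link_sd_faces_singleton_iff.1 hτw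
  obtain ⟨d, hd⟩ := hτL.1
  exact hvw (Finset.mem_singleton.1 (L.mem_of_singleton_mem_sd_faces (hτL.2.1 hd)
    ((hvτ d hd).subset (Finset.mem_singleton_self _))
    ((hwτ d hd).subset (Finset.mem_singleton_self _))))

theorem regNbhdBoundary_eq_disjoint_union_links_general (L : AbsSC V) :
    (∀ τ, τ ∈ regNbhdBoundary L ↔
      ∃ v : V, ({v} : Finset V) ∈ L.faces ∧
        τ ∈ (L.sd.sd.link {({({v} : Finset V)} : Finset (Finset V))}).faces) ∧
    (∀ v w : V, ({v} : Finset V) ∈ L.faces → ({w} : Finset V) ∈ L.faces → v ≠ w →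
      (L.sd.sd.link {({({v} : Finset V)} : Finset (Finset V))}).faces ∩
        (L.sd.sd.link {({({w} : Finset V)} : Finset (Finset V))}).faces = ∅) := by
  refine ⟨fun τ => ⟨exists_mem_link_of_mem_regNbhdBoundary,
    fun ⟨_, _, hτ⟩ => mem_regNbhdBoundary_of_mem_link hτ⟩, fun _ _ _ _ hvw => ?_⟩
  exact Set.disjoint_iff_inter_eq_empty.1 (disjoint_link_sd_sd_singleton hvw)

/-- the boundary of the regular neighborhood of the spine `K` in `L''` is
the disjoint union of the links `Lk_{L''}(v)` over the original vertices `v ∈ L⁽⁰⁾`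
(each such `v` appearing in `L''` as the chain `{{v}}`). -/
theorem regNbhdBoundary_eq_disjoint_union_links (L : AbsSC V) (hfin : L.faces.Finite) :
    (∀ τ, τ ∈ regNbhdBoundary L ↔
      ∃ v : V, ({v} : Finset V) ∈ L.faces ∧
        τ ∈ (L.sd.sd.link {({({v} : Finset V)} : Finset (Finset V))}).faces) ∧
    (∀ v w : V, ({v} : Finset V) ∈ L.faces → ({w} : Finset V) ∈ L.faces → v ≠ w →
      (L.sd.sd.link {({({v} : Finset V)} : Finset (Finset V))}).faces ∩
        (L.sd.sd.link {({({w} : Finset V)} : Finset (Finset V))}).faces = ∅) :=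
  regNbhdBoundary_eq_disjoint_union_links_general L
end
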